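/- arXiv:2204.02754 — 11 statements merged into one kernel-verified Lean document; each statement's English description precedes it below -/
import Mathlib

section
/- (i) For every nondegenerate symmetric bilinear form 𝒢 on E there exist linear maps H : V → V, σ : V* → V, τ : V → V* such that the linear map K : E → E defined by K(x+ξ) = (Hx + σξ) + (τx + H*ξ) satisfies 𝒢(a, b) = G₀(Ka, b) for all a, b ∈ E; this K is injective and satisfies (τx)(y) = (τy)(x) for all x, y ∈ V and ξ(ση) = η(σξ) for all ξ, η ∈ V*. (ii) Conversely, for any linear maps H : V → V, σ : V* → V, τ : V → V* with (τx)(y) = (τy)(x) for all x, y ∈ V and ξ(ση) = η(σξ) for all ξ, η ∈ V*, if the map K(x+ξ) = (Hx + σξ) + (τx + H*ξ) is injective, then 𝒢(a, b) := G₀(Ka, b) is a nondegenerate symmetric bilinear form on E. -/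
open Module

/-- characterization of nondegenerate symmetric bilinear forms on
`E = V × V*` in terms of the natural generalized metric `G₀` and an injective
endomorphism `K(x+ξ) = (Hx + σξ) + (τx + H*ξ)` with `τ` and `σ` symmetric. -/
theorem statement1 (V : Type*) [AddCommGroup V] [Module ℝ V] [FiniteDimensional ℝ V]
    (G0 : (V × Dual ℝ V) →ₗ[ℝ] (V × Dual ℝ V) →ₗ[ℝ] ℝ)
    (hG0 : ∀ (x y : V) (ξ η : Dual ℝ V), G0 (x, ξ) (y, η) = (1/2) * (ξ y + η x)) :
    (∀ G : (V × Dual ℝ V) →ₗ[ℝ] (V × Dual ℝ V) →ₗ[ℝ] ℝ,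
        (∀ a b, G a b = G b a) →
        (∀ a, (∀ b, G a b = 0) → a = 0) →
        ∃ (H : V →ₗ[ℝ] V) (σ : Dual ℝ V →ₗ[ℝ] V) (τ : V →ₗ[ℝ] Dual ℝ V),
          (∀ a b : V × Dual ℝ V,
              G a b = G0 (H a.1 + σ a.2, τ a.1 + H.dualMap a.2) b) ∧
          Function.Injective
            (fun a : V × Dual ℝ V =>
              ((H a.1 + σ a.2, τ a.1 + H.dualMap a.2) : V × Dual ℝ V)) ∧
          (∀ x y : V, τ x y = τ y x) ∧
          (∀ ξ η : Dual ℝ V, ξ (σ η) = η (σ ξ))) ∧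
    (∀ (H : V →ₗ[ℝ] V) (σ : Dual ℝ V →ₗ[ℝ] V) (τ : V →ₗ[ℝ] Dual ℝ V),
        (∀ x y : V, τ x y = τ y x) →
        (∀ ξ η : Dual ℝ V, ξ (σ η) = η (σ ξ)) →
        Function.Injective
          (fun a : V × Dual ℝ V =>
            ((H a.1 + σ a.2, τ a.1 + H.dualMap a.2) : V × Dual ℝ V)) →
        (∀ a b : V × Dual ℝ V,
            G0 (H a.1 + σ a.2, τ a.1 + H.dualMap a.2) b
              = G0 (H b.1 + σ b.2, τ b.1 + H.dualMap b.2) a) ∧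
        (∀ a : V × Dual ℝ V,
            (∀ b, G0 (H a.1 + σ a.2, τ a.1 + H.dualMap a.2) b = 0) → a = 0)) := by
  classical
  constructor
  · -- Part (i)
    intro G hsymm hnd
    set inl : V →ₗ[ℝ] V × Dual ℝ V := LinearMap.inl ℝ V (Dual ℝ V) with hinl
    set inr : Dual ℝ V →ₗ[ℝ] V × Dual ℝ V := LinearMap.inr ℝ V (Dual ℝ V) with hinr
    set H : V →ₗ[ℝ] V :=
      (evalEquiv ℝ V).symm.toLinearMap ∘ₗ ((2:ℝ) • ((G ∘ₗ inl).compl₂ inr)) with hHdef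
    set σ : Dual ℝ V →ₗ[ℝ] V :=
      (evalEquiv ℝ V).symm.toLinearMap ∘ₗ ((2:ℝ) • ((G ∘ₗ inr).compl₂ inr)) with hσdef
    set τ : V →ₗ[ℝ] Dual ℝ V := (2:ℝ) • ((G ∘ₗ inl).compl₂ inl) with hτdef
    have hHx : ∀ (x : V) (η : Dual ℝ V), η (H x) = 2 * G (x, 0) (0, η) := by
      intro x η
      simp [hHdef, hinl, hinr, smul_eq_mul]
    have hσx : ∀ (ξ η : Dual ℝ V), η (σ ξ) = 2 * G (0, ξ) (0, η) := by
      intro ξ η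
      simp [hσdef, hinr, smul_eq_mul]
    have hτx : ∀ x y : V, τ x y = 2 * G (x, 0) (y, 0) := by
      intro x y
      simp [hτdef, hinl, smul_eq_mul]
    have hHd : ∀ (ξ : Dual ℝ V) (y : V), H.dualMap ξ y = 2 * G (0, ξ) (y, 0) := by
      intro ξ y
      rw [LinearMap.dualMap_apply, hHx, hsymm]
    have key : ∀ a b : V × Dual ℝ V,
        G a b = G0 (H a.1 + σ a.2, τ a.1 + H.dualMap a.2) b := by
      rintro ⟨x, ξ⟩ ⟨y, η⟩
      have ha : ((x, ξ) : V × Dual ℝ V) = (x, 0) + (0, ξ) := by simp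
      have hb : ((y, η) : V × Dual ℝ V) = (y, 0) + (0, η) := by simp
      rw [hG0]
      simp only [LinearMap.add_apply, map_add]
      rw [hτx, hHd, hHx, hσx]
      conv_lhs => rw [ha, hb]
      simp only [map_add, LinearMap.add_apply]
      have e1 : G ((0 : V), ξ) ((y : V), (0 : Dual ℝ V)) = G (y, 0) (0, ξ) := hsymm _ _
      ring
    refine ⟨H, σ, τ, key, ?_, ?_, ?_⟩
    · intro a a' h
      simp only at h
      have hz : ∀ b, G (a - a') b = 0 := by
        intro b
        have : G a b = G a' b := by rw [key, key, h]
        simp [map_sub, LinearMap.sub_apply, this]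
      have := hnd _ hz
      exact sub_eq_zero.mp this
    · intro x y
      rw [hτx, hτx, hsymm]
    · intro ξ η
      rw [hσx, hσx, hsymm]
  · -- Part (ii)
    intro H σ τ hτ hσ hinj
    have expand : ∀ (x y : V) (ξ η : Dual ℝ V),
        G0 (H x + σ ξ, τ x + H.dualMap ξ) (y, η)
          = (1/2) * ((τ x y + ξ (H y)) + (η (H x) + η (σ ξ))) := by
      intro x y ξ η
      rw [hG0]
      simp only [LinearMap.add_apply, map_add, LinearMap.dualMap_apply]
      try ring
    constructor
    · rintro ⟨x, ξ⟩ ⟨y, η⟩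
      simp only
      rw [expand, expand, hτ x y, hσ η ξ]
      ring
    · rintro ⟨x, ξ⟩ hall
      simp only at hall
      have h1 : ∀ y, (τ x + H.dualMap ξ) y = 0 := by
        intro y
        have := hall (y, 0)
        rw [hG0] at this
        simp only [LinearMap.zero_apply, add_zero] at this
        linarith
      have h1' : τ x + H.dualMap ξ = 0 := LinearMap.ext h1
      have h2 : H x + σ ξ = 0 := by
        rw [← Module.forall_dual_apply_eq_zero_iff ℝ]
        intro η
        have := hall (0, η)
        rw [hG0] at this
        simp only [map_zero, zero_add] at this
        linarith
      have h0 : ((x, ξ) : V × Dual ℝ V) = (0, 0) := by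
        apply hinj
        show (H x + σ ξ, τ x + H.dualMap ξ)
            = (H 0 + σ 0, τ 0 + H.dualMap 0)
        simp [h2, h1']
      exact h0
end

section
/- (i) For every nondegenerate alternating bilinear form Ω on E there exist linear maps H : V → V, σ : V* → V, τ : V → V* such that the linear map K : E → E defined by K(x+ξ) = (Hx + σξ) + (τx − H*ξ) satisfies Ω(a, b) = G₀(Ka, b) for all a, b ∈ E; this K is injective and satisfies (τx)(y) = −(τy)(x) for all x, y ∈ V and ξ(ση) = −η(σξ) for all ξ, η ∈ V*. (ii) Conversely, for any linear maps H : V → V, σ : V* → V, τ : V → V* with (τx)(y) = −(τy)(x) for all x, y ∈ V and ξ(ση) = −η(σξ) for all ξ, η ∈ V*, if the map K(x+ξ) = (Hx + σξ) + (τx − H*ξ) is injective, then Ω(a, b) := G₀(Ka, b) is a nondegenerate alternating bilinear form on E. -/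
open Module

/-- characterization of nondegenerate alternating bilinear forms on
`E = V × V*` in terms of the natural generalized metric `G₀` and an injective
endomorphism `K(x+ξ) = (Hx + σξ) + (τx − H*ξ)` with `τ` and `σ` skew-symmetric. -/
theorem statement2 (V : Type*) [AddCommGroup V] [Module ℝ V] [FiniteDimensional ℝ V]
    (G0 : (V × Dual ℝ V) →ₗ[ℝ] (V × Dual ℝ V) →ₗ[ℝ] ℝ)
    (hG0 : ∀ (x y : V) (ξ η : Dual ℝ V), G0 (x, ξ) (y, η) = (1/2) * (ξ y + η x)) :
    (∀ Ω : (V × Dual ℝ V) →ₗ[ℝ] (V × Dual ℝ V) →ₗ[ℝ] ℝ,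
        (∀ a, Ω a a = 0) →
        (∀ a, (∀ b, Ω a b = 0) → a = 0) →
        ∃ (H : V →ₗ[ℝ] V) (σ : Dual ℝ V →ₗ[ℝ] V) (τ : V →ₗ[ℝ] Dual ℝ V),
          (∀ a b : V × Dual ℝ V,
              Ω a b = G0 (H a.1 + σ a.2, τ a.1 - H.dualMap a.2) b) ∧
          Function.Injective
            (fun a : V × Dual ℝ V =>
              ((H a.1 + σ a.2, τ a.1 - H.dualMap a.2) : V × Dual ℝ V)) ∧
          (∀ x y : V, τ x y = -(τ y x)) ∧
          (∀ ξ η : Dual ℝ V, ξ (σ η) = -(η (σ ξ)))) ∧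
    (∀ (H : V →ₗ[ℝ] V) (σ : Dual ℝ V →ₗ[ℝ] V) (τ : V →ₗ[ℝ] Dual ℝ V),
        (∀ x y : V, τ x y = -(τ y x)) →
        (∀ ξ η : Dual ℝ V, ξ (σ η) = -(η (σ ξ))) →
        Function.Injective
          (fun a : V × Dual ℝ V =>
            ((H a.1 + σ a.2, τ a.1 - H.dualMap a.2) : V × Dual ℝ V)) →
        (∀ a : V × Dual ℝ V, G0 (H a.1 + σ a.2, τ a.1 - H.dualMap a.2) a = 0) ∧
        (∀ a : V × Dual ℝ V,
            (∀ b, G0 (H a.1 + σ a.2, τ a.1 - H.dualMap a.2) b = 0) → a = 0)) := by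
  constructor
  · -- part (i)
    intro Ω hAlt hNondeg
    -- skew-symmetry of Ω
    have hSkew : ∀ a b, Ω a b = -(Ω b a) := by
      intro a b
      have h := hAlt (a + b)
      simp only [map_add, LinearMap.add_apply, hAlt a, hAlt b] at h
      linarith
    set inV : V →ₗ[ℝ] V × Dual ℝ V := LinearMap.inl ℝ V (Dual ℝ V) with hinV
    set inD : Dual ℝ V →ₗ[ℝ] V × Dual ℝ V := LinearMap.inr ℝ V (Dual ℝ V) with hinD
    set τ : V →ₗ[ℝ] Dual ℝ V := (2 : ℝ) • (Ω.comp inV).compl₂ inV with hτ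
    set H : V →ₗ[ℝ] V :=
      (evalEquiv ℝ V).symm.toLinearMap.comp ((2 : ℝ) • (Ω.comp inV).compl₂ inD) with hH
    set σ : Dual ℝ V →ₗ[ℝ] V :=
      (evalEquiv ℝ V).symm.toLinearMap.comp ((2 : ℝ) • (Ω.comp inD).compl₂ inD) with hσ
    have hτ' : ∀ x y : V, τ x y = 2 * Ω (x, 0) (y, 0) := by
      intro x y; simp [hτ, inV, LinearMap.compl₂_apply]
    have hH' : ∀ (x : V) (η : Dual ℝ V), η (H x) = 2 * Ω (x, 0) (0, η) := by
      intro x η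
      simp [hH, inV, inD, apply_evalEquiv_symm_apply, LinearMap.compl₂_apply]
    have hσ' : ∀ (ξ η : Dual ℝ V), η (σ ξ) = 2 * Ω (0, ξ) (0, η) := by
      intro ξ η
      simp [hσ, inD, apply_evalEquiv_symm_apply, LinearMap.compl₂_apply]
    have hmain : ∀ a b : V × Dual ℝ V,
        Ω a b = G0 (H a.1 + σ a.2, τ a.1 - H.dualMap a.2) b := by
      intro a b
      obtain ⟨x, ξ⟩ := a; obtain ⟨y, η⟩ := b
      have h1 : ((x, ξ) : V × Dual ℝ V) = (x, 0) + (0, ξ) := by simp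
      have h2 : ((y, η) : V × Dual ℝ V) = (y, 0) + (0, η) := by simp
      have hΩ : Ω (x, ξ) (y, η) =
          Ω (x, 0) (y, 0) + Ω (x, 0) (0, η) + Ω (0, ξ) (y, 0) + Ω (0, ξ) (0, η) := by
        rw [h1, h2]; simp only [map_add, LinearMap.add_apply]; ring
      have hflip : Ω (0, ξ) (y, 0) = -Ω (y, 0) (0, ξ) := hSkew _ _
      rw [hG0]
      simp only [LinearMap.sub_apply, LinearMap.dualMap_apply, map_add]
      rw [hΩ, hflip]
      have := hτ' x y
      have := hH' x η
      have := hH' y ξ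
      have := hσ' ξ η
      linarith
    -- K as a linear map
    set K : (V × Dual ℝ V) →ₗ[ℝ] (V × Dual ℝ V) :=
      LinearMap.prod (H.comp (LinearMap.fst ℝ V (Dual ℝ V)) + σ.comp (LinearMap.snd ℝ V (Dual ℝ V)))
        ((τ.comp (LinearMap.fst ℝ V (Dual ℝ V))) - (H.dualMap.comp (LinearMap.snd ℝ V (Dual ℝ V))))
      with hK
    have hKfun : ∀ a : V × Dual ℝ V,
        K a = (H a.1 + σ a.2, τ a.1 - H.dualMap a.2) := by
      intro a; rfl
    have hKinj : Function.Injective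
        (fun a : V × Dual ℝ V => ((H a.1 + σ a.2, τ a.1 - H.dualMap a.2) : V × Dual ℝ V)) := by
      intro a a' h
      simp only at h
      have hK0 : K (a - a') = 0 := by
        rw [map_sub, hKfun a, hKfun a', h, sub_self]
      have : a - a' = 0 := by
        apply hNondeg
        intro b
        rw [hmain, ← hKfun, hK0]
        simp
      exact sub_eq_zero.mp this
    refine ⟨H, σ, τ, hmain, hKinj, ?_, ?_⟩
    · intro x y
      rw [hτ' x y, hτ' y x, hSkew]; ring
    · intro ξ η
      rw [hσ' η ξ, hσ' ξ η, hSkew (0, η) (0, ξ)]; ring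
  · -- part (ii)
    intro H σ τ hτ hσ hKinj
    constructor
    · intro a
      obtain ⟨x, ξ⟩ := a
      rw [hG0]
      simp only [LinearMap.sub_apply, LinearMap.dualMap_apply, map_add]
      have h1 : τ x x = 0 := by have := hτ x x; linarith
      have h2 : ξ (σ ξ) = 0 := by have := hσ ξ ξ; linarith
      rw [h1, h2]; ring
    · intro a ha
      -- G0 (Ka, b) = 0 for all b implies Ka = 0
      have hKa1 : τ a.1 - H.dualMap a.2 = 0 := by
        ext y
        have := ha (y, 0)
        rw [hG0] at this
        simp only [LinearMap.zero_apply, LinearMap.sub_apply, LinearMap.dualMap_apply,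
          map_zero] at this ⊢
        linarith
      have hKa2 : H a.1 + σ a.2 = 0 := by
        rw [← Module.forall_dual_apply_eq_zero_iff ℝ]
        intro η
        have := ha (0, η)
        rw [hG0] at this
        simp only [LinearMap.sub_apply, LinearMap.dualMap_apply, map_zero] at this
        have h0 : ((0 : Dual ℝ V) : V → ℝ) 0 = 0 := rfl
        linarith [this]
      have : ((H a.1 + σ a.2, τ a.1 - H.dualMap a.2) : V × Dual ℝ V)
          = ((H (0 : (V × Dual ℝ V)).1 + σ (0 : (V × Dual ℝ V)).2,
              τ (0 : (V × Dual ℝ V)).1 - H.dualMap (0 : (V × Dual ℝ V)).2) : V × Dual ℝ V) := by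
        rw [hKa1, hKa2]; simp
      exact hKinj this
end

section
/- The pair (J_g, G₀) is a generalized almost Norden structure and (F_g, G₀) is a generalized pseudo-Riemannian almost product structure; precisely: J_g ∘ J_g = −id, G₀(J_g a, J_g b) = −G₀(a, b) for all a, b ∈ E, and its twin metric Φ_{J_g}(a, b) := G₀(J_g a, b) satisfies Φ_{J_g}(x+ξ, y+η) = (1/2)(g(x,y) − g(♯_g ξ, ♯_g η)); F_g ∘ F_g = id, G₀(F_g a, F_g b) = G₀(a, b) for all a, b ∈ E, and Φ_{F_g}(a, b) := G₀(F_g a, b) satisfies Φ_{F_g}(x+ξ, y+η) = (1/2)(g(x,y) + g(♯_g ξ, ♯_g η)). -/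
open Module

/-- `(J_g, G₀)` is a generalized almost Norden structure and
`(F_g, G₀)` a generalized pseudo-Riemannian almost product structure, with the
stated twin metrics. -/
theorem statement6 (V : Type*) [AddCommGroup V] [Module ℝ V] [FiniteDimensional ℝ V]
    (G0 : (V × Dual ℝ V) →ₗ[ℝ] (V × Dual ℝ V) →ₗ[ℝ] ℝ)
    (hG0 : ∀ (x y : V) (ξ η : Dual ℝ V), G0 (x, ξ) (y, η) = (1/2) * (ξ y + η x))
    (g : V →ₗ[ℝ] V →ₗ[ℝ] ℝ) (hgsymm : ∀ x y : V, g x y = g y x)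
    (flat : V →ₗ[ℝ] Dual ℝ V) (hflat : ∀ x y : V, flat x y = g x y)
    (sharp : Dual ℝ V →ₗ[ℝ] V)
    (hsf : ∀ ξ : Dual ℝ V, flat (sharp ξ) = ξ) (hfs : ∀ x : V, sharp (flat x) = x)
    (Jg : (V × Dual ℝ V) →ₗ[ℝ] (V × Dual ℝ V))
    (hJg : ∀ (x : V) (ξ : Dual ℝ V), Jg (x, ξ) = (-(sharp ξ), flat x))
    (Fg : (V × Dual ℝ V) →ₗ[ℝ] (V × Dual ℝ V))
    (hFg : ∀ (x : V) (ξ : Dual ℝ V), Fg (x, ξ) = (sharp ξ, flat x)) :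
    Jg ∘ₗ Jg = -LinearMap.id ∧
    (∀ a b, G0 (Jg a) (Jg b) = -(G0 a b)) ∧
    (∀ (x y : V) (ξ η : Dual ℝ V),
        G0 (Jg (x, ξ)) (y, η) = (1/2) * (g x y - g (sharp ξ) (sharp η))) ∧
    Fg ∘ₗ Fg = LinearMap.id ∧
    (∀ a b, G0 (Fg a) (Fg b) = G0 a b) ∧
    (∀ (x y : V) (ξ η : Dual ℝ V),
        G0 (Fg (x, ξ)) (y, η) = (1/2) * (g x y + g (sharp ξ) (sharp η))) := by

  have key : ∀ (x : V) (ξ : Dual ℝ V), ξ (sharp ξ) = ξ (sharp ξ) := fun _ _ => rfl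
  have hxi : ∀ (ξ : Dual ℝ V) (y : V), ξ y = g (sharp ξ) y := by
    intro ξ y
    rw [← hflat, hsf]
  refine ⟨?_, ?_, ?_, ?_, ?_, ?_⟩
  · apply LinearMap.ext
    rintro ⟨x, ξ⟩
    rw [LinearMap.comp_apply, hJg, hJg, map_neg, hsf, hfs]
    simp [Prod.neg_mk]
  · rintro ⟨x, ξ⟩ ⟨y, η⟩
    simp only [hJg, hG0, map_neg, LinearMap.neg_apply]
    rw [hflat, hflat, hxi ξ, hxi η, hgsymm (sharp ξ) y, hgsymm x (sharp η)]
    ring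
  · intro x y ξ η
    rw [hJg, hG0, hflat, hxi η, hgsymm (sharp η)]
    simp only [map_neg, LinearMap.neg_apply]
    ring
  · apply LinearMap.ext
    rintro ⟨x, ξ⟩
    rw [LinearMap.comp_apply, hFg, hFg, hsf, hfs, LinearMap.id_apply]
  · rintro ⟨x, ξ⟩ ⟨y, η⟩
    simp only [hFg, hG0]
    rw [hflat, hflat, hxi ξ, hxi η, hgsymm (sharp ξ) y, hgsymm x (sharp η)]
    ring
  · intro x y ξ η
    rw [hFg, hG0, hflat, hxi η, hgsymm (sharp η)]
    try ring
end

section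
/- Assume V ≠ {0}. Define 𝒥_♭ : E → E by 𝒥_♭(x+ξ) = Jx + (♭_g x + ε·J*ξ) and 𝒥_♯ : E → E by 𝒥_♯(x+ξ) = (Jx + ♯_g ξ) + ε·J*ξ. Then 𝒥_♭ ∘ 𝒥_♭ = −id and 𝒥_♯ ∘ 𝒥_♯ = −id, and for 𝒥 ∈ {𝒥_♭, 𝒥_♯}: there exists c ∈ {+1, −1} with G₀(𝒥a, 𝒥b) = c·G₀(a, b) for all a, b ∈ E if and only if ε = +1. When ε = +1, G₀(𝒥a, 𝒥b) = −G₀(a, b) for all a, b ∈ E (a generalized almost Norden structure), and the twin metrics Φ_♭(a,b) := G₀(𝒥_♭ a, b), Φ_♯(a,b) := G₀(𝒥_♯ a, b) satisfy Φ_♭(x+ξ, y+η) = G₀(Jx+ξ, Jy+η) + (1/2)g(x,y) and Φ_♯(x+ξ, y+η) = G₀(Jx+ξ, Jy+η) + (1/2)g(♯_g ξ, ♯_g η). -/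
open Module

/-- for a `(−1,ε)`-metric structure `(J, g)` on `V ≠ 0`, the
triangular maps `𝒥_♭(x+ξ) = Jx + (♭_g x + ε·J*ξ)` and
`𝒥_♯(x+ξ) = (Jx + ♯_g ξ) + ε·J*ξ` square to `−id`, are compatible with `G₀`
(for some `c ∈ {±1}`) iff `ε = 1`, in which case they are anti-isometries of
`G₀` with the stated twin metrics. -/
theorem statement10 (V : Type*) [AddCommGroup V] [Module ℝ V] [FiniteDimensional ℝ V]
    (hV : ∃ x : V, x ≠ 0)
    (G0 : (V × Dual ℝ V) →ₗ[ℝ] (V × Dual ℝ V) →ₗ[ℝ] ℝ)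
    (hG0 : ∀ (x y : V) (ξ η : Dual ℝ V), G0 (x, ξ) (y, η) = (1/2) * (ξ y + η x))
    (g : V →ₗ[ℝ] V →ₗ[ℝ] ℝ) (hgsymm : ∀ x y : V, g x y = g y x)
    (flat : V →ₗ[ℝ] Dual ℝ V) (hflat : ∀ x y : V, flat x y = g x y)
    (sharp : Dual ℝ V →ₗ[ℝ] V)
    (hsf : ∀ ξ : Dual ℝ V, flat (sharp ξ) = ξ) (hfs : ∀ x : V, sharp (flat x) = x)
    (ε : ℝ) (hε : ε = 1 ∨ ε = -1)
    (J : V →ₗ[ℝ] V) (hJ2 : J ∘ₗ J = -LinearMap.id)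
    (hJg : ∀ x y : V, g (J x) (J y) = ε * g x y)
    (Jb : (V × Dual ℝ V) →ₗ[ℝ] (V × Dual ℝ V))
    (hJb : ∀ (x : V) (ξ : Dual ℝ V), Jb (x, ξ) = (J x, flat x + ε • J.dualMap ξ))
    (Js : (V × Dual ℝ V) →ₗ[ℝ] (V × Dual ℝ V))
    (hJs : ∀ (x : V) (ξ : Dual ℝ V), Js (x, ξ) = (J x + sharp ξ, ε • J.dualMap ξ)) :
    Jb ∘ₗ Jb = -LinearMap.id ∧
    Js ∘ₗ Js = -LinearMap.id ∧
    ((∃ c : ℝ, (c = 1 ∨ c = -1) ∧ ∀ a b, G0 (Jb a) (Jb b) = c * G0 a b) ↔ ε = 1) ∧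
    ((∃ c : ℝ, (c = 1 ∨ c = -1) ∧ ∀ a b, G0 (Js a) (Js b) = c * G0 a b) ↔ ε = 1) ∧
    (ε = 1 →
      (∀ a b, G0 (Jb a) (Jb b) = -(G0 a b)) ∧
      (∀ a b, G0 (Js a) (Js b) = -(G0 a b)) ∧
      (∀ (x y : V) (ξ η : Dual ℝ V),
          G0 (Jb (x, ξ)) (y, η) = G0 (J x, ξ) (J y, η) + (1/2) * g x y) ∧
      (∀ (x y : V) (ξ η : Dual ℝ V),
          G0 (Js (x, ξ)) (y, η)
            = G0 (J x, ξ) (J y, η) + (1/2) * g (sharp ξ) (sharp η))) := by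

  have hε2 : ε * ε = 1 := by rcases hε with h | h <;> simp [h]
  have hJ2' : ∀ x : V, J (J x) = -x := by
    intro x
    have := LinearMap.ext_iff.mp hJ2 x
    simpa using this
  have hJg' : ∀ x y : V, g (J x) y = -(ε * g x (J y)) := by
    intro x y
    have h := hJg x (J y)
    rw [hJ2', map_neg] at h
    linarith
  have hxi : ∀ (ξ : Dual ℝ V) (z : V), ξ z = g (sharp ξ) z := by
    intro ξ z
    rw [← hsf ξ, hflat, hsf]
  refine ⟨?_, ?_, ?_, ?_, ?_⟩
  · apply LinearMap.ext
    rintro ⟨x, ξ⟩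
    simp only [LinearMap.comp_apply, hJb, map_add, map_smul, LinearMap.neg_apply,
      LinearMap.id_apply, Prod.neg_mk, Prod.mk.injEq]
    refine ⟨hJ2' x, ?_⟩
    apply LinearMap.ext
    intro y
    simp only [LinearMap.add_apply, LinearMap.smul_apply, LinearMap.dualMap_apply,
      LinearMap.coe_comp, Function.comp_apply, hflat, hJ2', map_neg, smul_eq_mul,
      LinearMap.neg_apply]
    linear_combination hJg' x y - ξ y * hε2
  · apply LinearMap.ext
    rintro ⟨x, ξ⟩
    simp only [LinearMap.comp_apply, hJs, map_add, map_smul, LinearMap.neg_apply,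
      LinearMap.id_apply, Prod.neg_mk, Prod.mk.injEq]
    constructor
    · have h1 : J (J x) = -x := hJ2' x
      have h2 : J (sharp ξ) + sharp (ε • J.dualMap ξ) = 0 := by
        have : flat (J (sharp ξ)) = -(ε • J.dualMap ξ) := by
          apply LinearMap.ext
          intro y
          simp only [hflat, LinearMap.neg_apply, LinearMap.smul_apply,
            LinearMap.dualMap_apply, smul_eq_mul]
          rw [hxi ξ (J y)]
          exact hJg' (sharp ξ) y
        have := congrArg sharp this
        rw [hfs, map_neg] at this
        rw [this]
        abel
      rw [map_smul] at h2
      rw [h1, add_assoc, h2, add_zero]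
    · apply LinearMap.ext
      intro y
      simp only [LinearMap.smul_apply, LinearMap.dualMap_apply, hJ2', map_neg,
        smul_eq_mul, LinearMap.neg_apply]
      linear_combination -ξ y * hε2
  · -- iff for Jb
    constructor
    · rintro ⟨c, hc, h⟩
      by_contra hne
      have hεm : ε = -1 := hε.resolve_left hne
      obtain ⟨x₀, hx₀⟩ := hV
      apply hx₀
      have key : ∀ x : V, g x x₀ = 0 := by
        intro x
        have h' := h (x, 0) (J x₀, 0)
        simp only [hJb, hG0, map_zero, smul_zero, add_zero, LinearMap.add_apply,
          LinearMap.dualMap_apply, hflat, hJ2', map_neg, LinearMap.zero_apply,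
          LinearMap.neg_apply, hJg, hεm] at h'
        have hs := hgsymm x x₀
        linarith
      have hfl : flat x₀ = 0 := by
        apply LinearMap.ext
        intro y
        simp only [hflat, LinearMap.zero_apply]
        rw [hgsymm]
        exact key y
      calc x₀ = sharp (flat x₀) := (hfs x₀).symm
        _ = 0 := by rw [hfl, map_zero]
    · intro h1
      refine ⟨-1, Or.inr rfl, fun a b => ?_⟩
      obtain ⟨x, ξ⟩ := a; obtain ⟨y, η⟩ := b
      subst h1
      simp only [hJb, hG0, one_smul, LinearMap.add_apply, LinearMap.dualMap_apply,
        hflat, hJ2', map_neg]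
      linear_combination (1/2) * hgsymm y (J x) + (1/2) * hJg' x y
  · -- iff for Js
    constructor
    · rintro ⟨c, hc, h⟩
      by_contra hne
      have hεm : ε = -1 := hε.resolve_left hne
      obtain ⟨x₀, hx₀⟩ := hV
      apply hx₀
      have key : ∀ x : V, g x x₀ = 0 := by
        intro x
        have h' := h (0, flat x) (0, flat (J x₀))
        simp only [hJs, hG0, map_zero, zero_add, hfs, LinearMap.smul_apply,
          LinearMap.dualMap_apply, hflat, hJ2', map_neg, smul_eq_mul, hJg, hεm,
          LinearMap.zero_apply] at h'
        have hs := hgsymm x x₀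
        linarith
      have hfl : flat x₀ = 0 := by
        apply LinearMap.ext
        intro y
        simp only [hflat, LinearMap.zero_apply]
        rw [hgsymm]
        exact key y
      calc x₀ = sharp (flat x₀) := (hfs x₀).symm
        _ = 0 := by rw [hfl, map_zero]
    · intro h1
      refine ⟨-1, Or.inr rfl, fun a b => ?_⟩
      obtain ⟨x, ξ⟩ := a; obtain ⟨y, η⟩ := b
      subst h1
      simp only [hJs, hG0, one_smul, LinearMap.dualMap_apply, map_add, hJ2',
        map_neg]
      rw [hxi ξ (J (sharp η)), hxi η (J (sharp ξ))]
      linear_combination (1/2) * hgsymm (sharp η) (J (sharp ξ))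
        + (1/2) * hJg' (sharp ξ) (sharp η)
  · intro h1
    subst h1
    refine ⟨?_, ?_, ?_, ?_⟩
    · rintro ⟨x, ξ⟩ ⟨y, η⟩
      simp only [hJb, hG0, one_smul, LinearMap.add_apply, LinearMap.dualMap_apply,
        hflat, hJ2', map_neg]
      linear_combination (1/2) * hgsymm y (J x) + (1/2) * hJg' x y
    · rintro ⟨x, ξ⟩ ⟨y, η⟩
      simp only [hJs, hG0, one_smul, LinearMap.dualMap_apply, map_add, hJ2',
        map_neg]
      rw [hxi ξ (J (sharp η)), hxi η (J (sharp ξ))]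
      linear_combination (1/2) * hgsymm (sharp η) (J (sharp ξ))
        + (1/2) * hJg' (sharp ξ) (sharp η)
    · intro x y ξ η
      simp only [hJb, hG0, one_smul, LinearMap.add_apply, LinearMap.dualMap_apply,
        hflat]
      ring
    · intro x y ξ η
      simp only [hJs, hG0, one_smul, LinearMap.dualMap_apply, map_add]
      rw [hxi η (sharp ξ)]
      linear_combination (1/2) * hgsymm (sharp η) (sharp ξ)
end

section
/- Assume V ≠ {0}. Define ℱ_♭ : E → E by ℱ_♭(x+ξ) = Fx + (♭_g x − ε·F*ξ) and ℱ_♯ : E → E by ℱ_♯(x+ξ) = (Fx + ♯_g ξ) − ε·F*ξ. Then ℱ_♭ ∘ ℱ_♭ = id and ℱ_♯ ∘ ℱ_♯ = id, and for ℱ ∈ {ℱ_♭, ℱ_♯}: there exists c ∈ {+1, −1} with G₀(ℱa, ℱb) = c·G₀(a, b) for all a, b ∈ E if and only if ε = −1. When ε = −1, G₀(ℱa, ℱb) = G₀(a, b) for all a, b ∈ E (a generalized pseudo-Riemannian almost product structure), and the twin metrics Φ_♭(a,b) := G₀(ℱ_♭ a, b), Φ_♯(a,b) := G₀(ℱ_♯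 a, b) satisfy Φ_♭(x+ξ, y+η) = G₀(Fx+ξ, Fy+η) + (1/2)g(x,y) and Φ_♯(x+ξ, y+η) = G₀(Fx+ξ, Fy+η) + (1/2)g(♯_g ξ, ♯_g η). -/
open Module

/-- for a `(+1,ε)`-metric structure `(F, g)` on `V ≠ 0`, the
triangular maps `ℱ_♭(x+ξ) = Fx + (♭_g x − ε·F*ξ)` and
`ℱ_♯(x+ξ) = (Fx + ♯_g ξ) − ε·F*ξ` square to `id`, are compatible with `G₀`
(for some `c ∈ {±1}`) iff `ε = −1`, in which case they are isometries of `G₀`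
with the stated twin metrics. -/
theorem statement11 (V : Type*) [AddCommGroup V] [Module ℝ V] [FiniteDimensional ℝ V]
    (hV : ∃ x : V, x ≠ 0)
    (G0 : (V × Dual ℝ V) →ₗ[ℝ] (V × Dual ℝ V) →ₗ[ℝ] ℝ)
    (hG0 : ∀ (x y : V) (ξ η : Dual ℝ V), G0 (x, ξ) (y, η) = (1/2) * (ξ y + η x))
    (g : V →ₗ[ℝ] V →ₗ[ℝ] ℝ) (hgsymm : ∀ x y : V, g x y = g y x)
    (flat : V →ₗ[ℝ] Dual ℝ V) (hflat : ∀ x y : V, flat x y = g x y)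
    (sharp : Dual ℝ V →ₗ[ℝ] V)
    (hsf : ∀ ξ : Dual ℝ V, flat (sharp ξ) = ξ) (hfs : ∀ x : V, sharp (flat x) = x)
    (ε : ℝ) (hε : ε = 1 ∨ ε = -1)
    (F : V →ₗ[ℝ] V) (hF2 : F ∘ₗ F = LinearMap.id)
    (hFg : ∀ x y : V, g (F x) (F y) = ε * g x y)
    (Fb : (V × Dual ℝ V) →ₗ[ℝ] (V × Dual ℝ V))
    (hFb : ∀ (x : V) (ξ : Dual ℝ V), Fb (x, ξ) = (F x, flat x - ε • F.dualMap ξ))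
    (Fs : (V × Dual ℝ V) →ₗ[ℝ] (V × Dual ℝ V))
    (hFs : ∀ (x : V) (ξ : Dual ℝ V), Fs (x, ξ) = (F x + sharp ξ, -(ε • F.dualMap ξ))) :
    Fb ∘ₗ Fb = LinearMap.id ∧
    Fs ∘ₗ Fs = LinearMap.id ∧
    ((∃ c : ℝ, (c = 1 ∨ c = -1) ∧ ∀ a b, G0 (Fb a) (Fb b) = c * G0 a b) ↔ ε = -1) ∧
    ((∃ c : ℝ, (c = 1 ∨ c = -1) ∧ ∀ a b, G0 (Fs a) (Fs b) = c * G0 a b) ↔ ε = -1) ∧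
    (ε = -1 →
      (∀ a b, G0 (Fb a) (Fb b) = G0 a b) ∧
      (∀ a b, G0 (Fs a) (Fs b) = G0 a b) ∧
      (∀ (x y : V) (ξ η : Dual ℝ V),
          G0 (Fb (x, ξ)) (y, η) = G0 (F x, ξ) (F y, η) + (1/2) * g x y) ∧
      (∀ (x y : V) (ξ η : Dual ℝ V),
          G0 (Fs (x, ξ)) (y, η)
            = G0 (F x, ξ) (F y, η) + (1/2) * g (sharp ξ) (sharp η))) := by

  -- basic facts
  have hFF : ∀ x : V, F (F x) = x := by
    intro x
    have := LinearMap.ext_iff.mp hF2 x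
    simpa using this
  have hdd : ∀ ξ : Dual ℝ V, F.dualMap (F.dualMap ξ) = ξ := by
    intro ξ; ext y; simp [LinearMap.dualMap_apply, hFF]
  have hflat_inj : ∀ a b : V, flat a = flat b → a = b := by
    intro a b h; rw [← hfs a, h, hfs b]
  have hflatF : ∀ x : V, flat (F x) = ε • F.dualMap (flat x) := by
    intro x; ext y
    have : g (F x) y = g (F x) (F (F y)) := by rw [hFF]
    simp only [hflat, LinearMap.smul_apply, LinearMap.dualMap_apply, hflat, smul_eq_mul]
    rw [this, hFg]
  have hFsharp : ∀ ξ : Dual ℝ V, F (sharp ξ) = ε • sharp (F.dualMap ξ) := by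
    intro ξ
    apply hflat_inj
    rw [hflatF, hsf, map_smul, hsf]
  have hε2 : ε * ε = 1 := by rcases hε with h | h <;> rw [h] <;> norm_num
  -- squares to id
  have hFb2 : Fb ∘ₗ Fb = LinearMap.id := by
    apply LinearMap.ext; intro a; obtain ⟨x, ξ⟩ := a
    rw [LinearMap.comp_apply, hFb, hFb, LinearMap.id_apply]
    refine Prod.ext (hFF x) ?_
    show flat (F x) - ε • F.dualMap (flat x - ε • F.dualMap ξ) = ξ
    rw [hflatF, map_sub, map_smul, hdd, smul_sub, smul_smul, hε2, one_smul]
    abel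
  have hFs2 : Fs ∘ₗ Fs = LinearMap.id := by
    apply LinearMap.ext; intro a; obtain ⟨x, ξ⟩ := a
    rw [LinearMap.comp_apply, hFs, hFs, LinearMap.id_apply]
    refine Prod.ext ?_ ?_
    · show F (F x + sharp ξ) + sharp (-(ε • F.dualMap ξ)) = x
      rw [map_add, hFF, hFsharp, map_neg, map_smul]
      abel
    · show -(ε • F.dualMap (-(ε • F.dualMap ξ))) = ξ
      rw [map_neg, map_smul, hdd, smul_neg, neg_neg, smul_smul, hε2, one_smul]
  -- key computations
  have key_b : ∀ (x y : V) (ξ η : Dual ℝ V),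
      G0 (Fb (x, ξ)) (Fb (y, η))
        = (1/2) * (g x (F y) + g y (F x)) - ε * G0 (x, ξ) (y, η) := by
    intro x y ξ η
    rw [hFb, hFb, hG0, hG0]
    simp only [LinearMap.sub_apply, LinearMap.smul_apply, LinearMap.dualMap_apply,
      smul_eq_mul, hflat, hFF]
    ring
  have key_s : ∀ (x y : V) (ξ η : Dual ℝ V),
      G0 (Fs (x, ξ)) (Fs (y, η))
        = -(ε/2) * (g (sharp ξ) (F (sharp η)) + g (sharp η) (F (sharp ξ)))
          - ε * G0 (x, ξ) (y, η) := by
    intro x y ξ η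
    rw [hFs, hFs, hG0, hG0]
    have h1 : ξ (F (sharp η)) = g (sharp ξ) (F (sharp η)) := by
      rw [← hflat, hsf]
    have h2 : η (F (sharp ξ)) = g (sharp η) (F (sharp ξ)) := by
      rw [← hflat, hsf]
    simp only [LinearMap.neg_apply, LinearMap.smul_apply, LinearMap.dualMap_apply,
      smul_eq_mul, map_add, hFF, h1, h2]
    ring
  -- the cross term vanishes when ε = -1
  have hcross : ε = -1 → ∀ u v : V, g u (F v) + g v (F u) = 0 := by
    intro he u v
    have h1 : g u (F v) = g (F (F u)) (F v) := by rw [hFF]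
    rw [h1, hFg, he, hgsymm (F u) v]
    ring
  -- when ε = 1 the cross term cannot vanish identically
  have hcontra : ε = 1 → (∀ u v : V, g u (F v) + g v (F u) = 0) → False := by
    intro he h
    have h1 : ∀ v : V, g v v = 0 := by
      intro v
      have := h (F v) v
      rw [hFF, hFg, he, one_mul] at this
      linarith
    have h2 : ∀ u v : V, g u v = 0 := by
      intro u v
      have := h1 (u + v)
      simp only [map_add, LinearMap.add_apply] at this
      rw [h1 u, h1 v, hgsymm v u] at this
      linarith
    obtain ⟨x, hx⟩ := hV
    apply hx
    have : flat x = 0 := by ext y; simp [hflat, h2]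
    rw [← hfs x, this, map_zero]
  -- isometry when ε = -1
  have hiso_b : ε = -1 → ∀ a b, G0 (Fb a) (Fb b) = G0 a b := by
    intro he a b
    obtain ⟨x, ξ⟩ := a; obtain ⟨y, η⟩ := b
    rw [key_b, hcross he, he]
    ring
  have hiso_s : ε = -1 → ∀ a b, G0 (Fs a) (Fs b) = G0 a b := by
    intro he a b
    obtain ⟨x, ξ⟩ := a; obtain ⟨y, η⟩ := b
    rw [key_s, hcross he, he]
    ring
  refine ⟨hFb2, hFs2, ?_, ?_, ?_⟩
  · constructor
    · rintro ⟨c, _, hc⟩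
      rcases hε with he | he
      · exfalso
        apply hcontra he
        intro u v
        have := hc (u, 0) (v, 0)
        rw [key_b, hG0] at this
        simp only [LinearMap.zero_apply, hG0] at this
        nlinarith [this]
      · exact he
    · intro he
      exact ⟨1, Or.inl rfl, fun a b => by rw [hiso_b he a b, one_mul]⟩
  · constructor
    · rintro ⟨c, _, hc⟩
      rcases hε with he | he
      · exfalso
        apply hcontra he
        intro u v
        have := hc (0, flat u) (0, flat v)
        rw [key_s, hG0] at this
        simp only [LinearMap.zero_apply, map_zero, hfs] at this
        nlinarith [this]
      · exact he
    · intro he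
      exact ⟨1, Or.inl rfl, fun a b => by rw [hiso_s he a b, one_mul]⟩
  · intro he
    refine ⟨hiso_b he, hiso_s he, ?_, ?_⟩
    · intro x y ξ η
      rw [hFb, hG0, hG0]
      simp only [LinearMap.sub_apply, LinearMap.smul_apply, LinearMap.dualMap_apply,
        smul_eq_mul, hflat, he]
      ring
    · intro x y ξ η
      rw [hFs, hG0, hG0]
      have h1 : η (sharp ξ) = g (sharp ξ) (sharp η) := by
        rw [hgsymm, ← hflat, hsf]
      simp only [LinearMap.neg_apply, LinearMap.smul_apply, LinearMap.dualMap_apply,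
        smul_eq_mul, map_add, he, h1]
      ring
end

section
/- Assume V ≠ {0}. Define F_{J,g} : E → E by F_{J,g}(x+ξ) = (Jx + √2·♯_g ξ) + (√2·♭_g x + ε·J*ξ). Then F_{J,g} ∘ F_{J,g} = id, and there exists c ∈ {+1, −1} with G₀(F_{J,g} a, F_{J,g} b) = c·G₀(a, b) for all a, b ∈ E if and only if ε = +1. When ε = +1, G₀(F_{J,g} a, F_{J,g} b) = G₀(a, b) for all a, b ∈ E (a generalized pseudo-Riemannian almost product structure), and the twin metric Φ(a,b) := G₀(F_{J,g} a, b) satisfies Φ(x+ξ, y+η) = G₀(Jx+ξ, Jy+η) + (√2/2)(g(x,y) + g(♯_g ξ, ♯_g η)). -/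
open Module

/-- for a `(−1,ε)`-metric structure `(J, g)` on `V ≠ 0`, the map
`F_{J,g}(x+ξ) = (Jx + √2·♯_g ξ) + (√2·♭_g x + ε·J*ξ)` squares to `id`, is
compatible with `G₀` (for some `c ∈ {±1}`) iff `ε = 1`, in which case it is a
`G₀`-isometry with the stated twin metric. -/
theorem statement12 (V : Type*) [AddCommGroup V] [Module ℝ V] [FiniteDimensional ℝ V]
    (hV : ∃ x : V, x ≠ 0)
    (G0 : (V × Dual ℝ V) →ₗ[ℝ] (V × Dual ℝ V) →ₗ[ℝ] ℝ)
    (hG0 : ∀ (x y : V) (ξ η : Dual ℝ V), G0 (x, ξ) (y, η) = (1/2) * (ξ y + η x))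
    (g : V →ₗ[ℝ] V →ₗ[ℝ] ℝ) (hgsymm : ∀ x y : V, g x y = g y x)
    (flat : V →ₗ[ℝ] Dual ℝ V) (hflat : ∀ x y : V, flat x y = g x y)
    (sharp : Dual ℝ V →ₗ[ℝ] V)
    (hsf : ∀ ξ : Dual ℝ V, flat (sharp ξ) = ξ) (hfs : ∀ x : V, sharp (flat x) = x)
    (ε : ℝ) (hε : ε = 1 ∨ ε = -1)
    (J : V →ₗ[ℝ] V) (hJ2 : J ∘ₗ J = -LinearMap.id)
    (hJg : ∀ x y : V, g (J x) (J y) = ε * g x y)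
    (FJg : (V × Dual ℝ V) →ₗ[ℝ] (V × Dual ℝ V))
    (hFJg : ∀ (x : V) (ξ : Dual ℝ V),
        FJg (x, ξ) = (J x + Real.sqrt 2 • sharp ξ,
                      Real.sqrt 2 • flat x + ε • J.dualMap ξ)) :
    FJg ∘ₗ FJg = LinearMap.id ∧
    ((∃ c : ℝ, (c = 1 ∨ c = -1) ∧ ∀ a b, G0 (FJg a) (FJg b) = c * G0 a b) ↔ ε = 1) ∧
    (ε = 1 →
      (∀ a b, G0 (FJg a) (FJg b) = G0 a b) ∧
      (∀ (x y : V) (ξ η : Dual ℝ V),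
          G0 (FJg (x, ξ)) (y, η)
            = G0 (J x, ξ) (J y, η)
              + (Real.sqrt 2 / 2) * (g x y + g (sharp ξ) (sharp η)))) := by
  have hs2 : Real.sqrt 2 * Real.sqrt 2 = 2 := Real.mul_self_sqrt (by norm_num)
  have hε2 : ε * ε = 1 := by rcases hε with h | h <;> rw [h] <;> norm_num
  have hJJ : ∀ x : V, J (J x) = -x := by
    intro x
    simpa using LinearMap.ext_iff.mp hJ2 x
  have hsg : ∀ (ξ : Dual ℝ V) (b : V), g (sharp ξ) b = ξ b := by
    intro ξ b; rw [← hflat, hsf]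
  have hgs : ∀ (a : V) (η : Dual ℝ V), g a (sharp η) = η a := by
    intro a η; rw [hgsymm, hsg]
  have hgJ1 : ∀ a b : V, g (J a) b = -(ε * g a (J b)) := by
    intro a b
    have h1 : g (J a) (J (J b)) = ε * g a (J b) := hJg a (J b)
    rw [hJJ b, map_neg] at h1
    linarith
  have hgJ2 : ∀ a b : V, g a (J b) = -(ε * g (J a) b) := by
    intro a b
    linear_combination ε * hgJ1 a b - g a (J b) * hε2
  have hx : ∀ ξ η : Dual ℝ V, ξ (sharp η) = η (sharp ξ) := by
    intro ξ η
    rw [← hsg ξ (sharp η), hgsymm, hsg]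
  have eJs : ∀ ξ η : Dual ℝ V, ξ (J (sharp η)) = -(ε * η (J (sharp ξ))) := by
    intro ξ η
    rw [← hsg ξ (J (sharp η)), hgJ2, hgs]
  have gswap : ∀ x y : V, g y (J x) = -(ε * g x (J y)) := by
    intro x y; rw [hgsymm, hgJ1]
  have hfJ : ∀ x : V, flat (J x) = (-ε) • J.dualMap (flat x) := by
    intro x
    ext y
    simp only [hflat, LinearMap.smul_apply, LinearMap.dualMap_apply, smul_eq_mul, hflat]
    rw [hgJ1]; ring
  have hJs : ∀ ξ : Dual ℝ V, J (sharp ξ) = (-ε) • sharp (J.dualMap ξ) := by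
    intro ξ
    have h1 : flat (J (sharp ξ)) = (-ε) • J.dualMap ξ := by
      rw [hfJ, hsf]
    rw [← hfs (J (sharp ξ)), h1, map_smul]
  have hJdd : ∀ ξ : Dual ℝ V, J.dualMap (J.dualMap ξ) = -ξ := by
    intro ξ
    ext y
    simp [LinearMap.dualMap_apply, hJJ]
  -- Part 1 : F ∘ F = id
  have hFF : FJg ∘ₗ FJg = LinearMap.id := by
    apply LinearMap.ext
    rintro ⟨x, ξ⟩
    simp only [LinearMap.comp_apply, hFJg, LinearMap.id_apply]
    refine Prod.ext ?_ ?_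
    · simp only [map_add, map_smul, hJJ, hfs, hJs, hJdd]
      match_scalars <;> first
        | ring1
        | linear_combination hs2
        | linear_combination -hs2
        | linear_combination -hs2 - hε2
        | linear_combination -2*hε2
        | linear_combination hs2 + hε2
    · simp only [map_add, map_smul, hfJ, hsf, hJdd]
      match_scalars <;> first | ring1 | linear_combination hs2 - hε2
  -- isometry when ε = 1
  have hiso : ε = 1 → ∀ a b, G0 (FJg a) (FJg b) = G0 a b := by
    intro hε1
    rintro ⟨x, ξ⟩ ⟨y, η⟩
    rw [hFJg, hFJg, hG0, hG0]
    simp only [map_add, map_smul, LinearMap.add_apply, LinearMap.smul_apply, smul_eq_mul,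
      LinearMap.dualMap_apply, hflat, hJJ, map_neg, hgs, hsg, hsf]
    rw [hε1] at gswap eJs ⊢
    linear_combination (Real.sqrt 2 / 2) * gswap x y + (Real.sqrt 2 / 2) * eJs ξ η
      + ((ξ y + η x) / 2) * hs2
  -- twin metric
  have htwin : ε = 1 → ∀ (x y : V) (ξ η : Dual ℝ V),
      G0 (FJg (x, ξ)) (y, η)
        = G0 (J x, ξ) (J y, η)
          + (Real.sqrt 2 / 2) * (g x y + g (sharp ξ) (sharp η)) := by
    intro hε1 x y ξ η
    rw [hFJg, hG0, hG0]
    simp only [LinearMap.add_apply, LinearMap.smul_apply, smul_eq_mul,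
      LinearMap.dualMap_apply, hflat, map_add, map_smul, hsg, hgs, hε1]
    rw [hx η ξ]
    ring
  refine ⟨hFF, ⟨?_, fun hε1 => ⟨1, Or.inl rfl, fun a b => by rw [hiso hε1 a b, one_mul]⟩⟩,
    fun hε1 => ⟨hiso hε1, htwin hε1⟩⟩
  rintro ⟨c, hc, hcomp⟩
  rcases hε with hε1 | hεm
  · exact hε1
  exfalso
  obtain ⟨x0, hx0⟩ := hV
  have hfx0 : flat x0 ≠ 0 := by
    intro h
    exact hx0 (by rw [← hfs x0, h, map_zero])
  obtain ⟨z, hz⟩ : ∃ z, flat x0 z ≠ 0 := by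
    by_contra h
    push_neg at h
    exact hfx0 (LinearMap.ext h)
  have h1 := hcomp (x0, 0) (-(J z), 0)
  have e1 : FJg (x0, 0) = (J x0, Real.sqrt 2 • flat x0) := by
    rw [hFJg]; simp
  have e2 : FJg (-(J z), 0) = (z, -(Real.sqrt 2 • flat (J z))) := by
    rw [hFJg]; simp [map_neg, hJJ]
  rw [e1, e2, hG0, hG0] at h1
  simp only [LinearMap.zero_apply, LinearMap.neg_apply, LinearMap.smul_apply, smul_eq_mul,
    hflat, map_neg, add_zero, mul_zero, zero_add] at h1
  rw [hJg, hεm, hgsymm z x0] at h1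
  have hzz : g x0 z ≠ 0 := by rw [← hflat]; exact hz
  have hsq : (0:ℝ) < Real.sqrt 2 := Real.sqrt_pos.mpr (by norm_num)
  have h2 : Real.sqrt 2 * g x0 z = 0 := by linarith
  exact hzz ((mul_eq_zero.mp h2).resolve_left (ne_of_gt hsq))
end

section
/- Assume V ≠ {0}. Define J_{F,g} : E → E by J_{F,g}(x+ξ) = (Fx − √2·♯_g ξ) + (√2·♭_g x − ε·F*ξ). Then J_{F,g} ∘ J_{F,g} = −id, and there exists c ∈ {+1, −1} with G₀(J_{F,g} a, J_{F,g} b) = c·G₀(a, b) for all a, b ∈ E if and only if ε = −1. When ε = −1, G₀(J_{F,g} a, J_{F,g} b) = −G₀(a, b) for all a, b ∈ E (a generalized almost Norden structure), and the twin metric Φ(a,b) := G₀(J_{F,g} a, b) satisfies Φ(x+ξ, y+η) = G₀(Fx+ξ, Fy+η) + (√2/2)(g(x,y) − g(♯_g ξ, ♯_g η)). -/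
open Module

/-- for a `(+1,ε)`-metric structure `(F, g)` on `V ≠ 0`, the map
`J_{F,g}(x+ξ) = (Fx − √2·♯_g ξ) + (√2·♭_g x − ε·F*ξ)` squares to `−id`, is
compatible with `G₀` (for some `c ∈ {±1}`) iff `ε = −1`, in which case it is a
`G₀`-anti-isometry with the stated twin metric. -/
theorem statement13 (V : Type*) [AddCommGroup V] [Module ℝ V] [FiniteDimensional ℝ V]
    (hV : ∃ x : V, x ≠ 0)
    (G0 : (V × Dual ℝ V) →ₗ[ℝ] (V × Dual ℝ V) →ₗ[ℝ] ℝ)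
    (hG0 : ∀ (x y : V) (ξ η : Dual ℝ V), G0 (x, ξ) (y, η) = (1/2) * (ξ y + η x))
    (g : V →ₗ[ℝ] V →ₗ[ℝ] ℝ) (hgsymm : ∀ x y : V, g x y = g y x)
    (flat : V →ₗ[ℝ] Dual ℝ V) (hflat : ∀ x y : V, flat x y = g x y)
    (sharp : Dual ℝ V →ₗ[ℝ] V)
    (hsf : ∀ ξ : Dual ℝ V, flat (sharp ξ) = ξ) (hfs : ∀ x : V, sharp (flat x) = x)
    (ε : ℝ) (hε : ε = 1 ∨ ε = -1)
    (F : V →ₗ[ℝ] V) (hF2 : F ∘ₗ F = LinearMap.id)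
    (hFg : ∀ x y : V, g (F x) (F y) = ε * g x y)
    (JFg : (V × Dual ℝ V) →ₗ[ℝ] (V × Dual ℝ V))
    (hJFg : ∀ (x : V) (ξ : Dual ℝ V),
        JFg (x, ξ) = (F x - Real.sqrt 2 • sharp ξ,
                      Real.sqrt 2 • flat x - ε • F.dualMap ξ)) :
    JFg ∘ₗ JFg = -LinearMap.id ∧
    ((∃ c : ℝ, (c = 1 ∨ c = -1) ∧ ∀ a b, G0 (JFg a) (JFg b) = c * G0 a b) ↔ ε = -1) ∧
    (ε = -1 →
      (∀ a b, G0 (JFg a) (JFg b) = -(G0 a b)) ∧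
      (∀ (x y : V) (ξ η : Dual ℝ V),
          G0 (JFg (x, ξ)) (y, η)
            = G0 (F x, ξ) (F y, η)
              + (Real.sqrt 2 / 2) * (g x y - g (sharp ξ) (sharp η)))) := by
  have hε2 : ε * ε = 1 := by rcases hε with h | h <;> simp [h]
  have hFF : ∀ x : V, F (F x) = x := fun x => congrArg (fun f => f x) hF2
  have hs2 : Real.sqrt 2 * Real.sqrt 2 = 2 := Real.mul_self_sqrt (by norm_num)
  have hgF : ∀ x y : V, g x (F y) = ε * g (F x) y := by
    intro x y
    calc g x (F y) = g (F (F x)) (F y) := by rw [hFF]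
      _ = ε * g (F x) y := hFg _ _
  have hgswap : ∀ x y : V, g y (F x) = ε * g x (F y) := by
    intro x y
    rw [hgsymm]
    linear_combination (-ε) * hgF x y + (-(g (F x) y)) * hε2
  have hxi : ∀ (ξ : Dual ℝ V) (y : V), ξ y = g (sharp ξ) y := by
    intro ξ y
    conv_lhs => rw [← hsf ξ]
    rw [hflat]
  have hpair : ∀ (x : V) (η : Dual ℝ V), g x (sharp η) = η x := by
    intro x η
    rw [hgsymm, ← hxi]
  have hdualflat : ∀ x : V, F.dualMap (flat x) = ε • flat (F x) := by
    intro x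
    ext y
    simp only [LinearMap.dualMap_apply, LinearMap.smul_apply, smul_eq_mul, hflat]
    exact hgF x y
  have hsharpdual : ∀ ξ : Dual ℝ V, sharp (F.dualMap ξ) = ε • F (sharp ξ) := by
    intro ξ
    conv_lhs => rw [← hsf ξ, hdualflat]
    rw [map_smul, hfs]
  have hdd : ∀ ξ : Dual ℝ V, F.dualMap (F.dualMap ξ) = ξ := by
    intro ξ
    ext y
    simp [LinearMap.dualMap_apply, hFF]
  have hcross : ∀ (ξ η : Dual ℝ V), η (F (sharp ξ)) = ε * ξ (F (sharp η)) := by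
    intro ξ η
    rw [hxi η, hxi ξ, hgswap]
  -- the anti-isometry property, used twice
  have hanti : ε = -1 → ∀ a b, G0 (JFg a) (JFg b) = -(G0 a b) := by
    intro hem1
    rintro ⟨x, ξ⟩ ⟨y, η⟩
    rw [hJFg, hJFg, hG0, hG0]
    simp only [LinearMap.sub_apply, LinearMap.smul_apply, smul_eq_mul, map_sub, map_smul,
      LinearMap.dualMap_apply, hFF, hflat, hem1]
    have h1 := hgswap x y
    have h2 := hcross ξ η
    rw [hem1] at h1 h2
    linear_combination (-1 : ℝ) * hpair x η + (-1 : ℝ) * hpair y ξ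
      + (Real.sqrt 2 / 2) * h1 + (-(Real.sqrt 2) / 2) * h2
      + (-(g x (sharp η) + g y (sharp ξ)) / 2) * hs2
  refine ⟨?_, ?_, ?_⟩
  · -- J ∘ J = -id
    apply LinearMap.ext
    rintro ⟨x, ξ⟩
    simp only [LinearMap.comp_apply, LinearMap.neg_apply, LinearMap.id_apply]
    rw [hJFg, hJFg]
    simp only [map_sub, map_smul, hFF, hfs, hsf, hsharpdual, hdualflat, hdd]
    refine Prod.ext ?_ ?_ <;>
      simp only [Prod.fst_sub, Prod.snd_sub, Prod.smul_fst, Prod.smul_snd, Prod.fst_neg,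
        Prod.snd_neg, smul_smul]
    · rw [hε2, one_smul]
      match_scalars
      · linear_combination -hs2
      · ring
    · match_scalars
      · linear_combination (-(Real.sqrt 2)) * hε2
      · linear_combination hε2 - hs2
  · constructor
    · rintro ⟨c, hc, hcall⟩
      rcases hε with h1 | h1
      · exfalso
        obtain ⟨x₀, hx₀⟩ := hV
        have key : ∀ x y : V, g x (F y) = 0 := by
          intro x y
          have h := hcall (x, 0) (y, 0)
          rw [hJFg, hJFg, hG0, hG0] at h
          simp only [map_zero, smul_zero, sub_zero, LinearMap.sub_apply, LinearMap.smul_apply,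
            smul_eq_mul, hflat, LinearMap.zero_apply, h1, one_smul] at h
          have h2 : g y (F x) = g x (F y) := by
            have := hgswap x y; rw [h1, one_mul] at this; exact this
          have hspos : Real.sqrt 2 > 0 := Real.sqrt_pos.mpr (by norm_num)
          nlinarith [h, h2]
        have key2 : ∀ y : V, g x₀ y = 0 := by
          intro y
          have := key x₀ (F y)
          rwa [hFF] at this
        apply hx₀
        have : flat x₀ = 0 := by ext y; simp [hflat, key2]
        rw [← hfs x₀, this, map_zero]
      · exact h1
    · intro hem1
      exact ⟨-1, Or.inr rfl, fun a b => by rw [hanti hem1 a b]; ring⟩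
  · intro hem1
    refine ⟨hanti hem1, ?_⟩
    intro x y ξ η
    rw [hJFg, hG0, hG0]
    simp only [LinearMap.sub_apply, LinearMap.smul_apply, smul_eq_mul, map_sub, map_smul,
      LinearMap.dualMap_apply, hflat, hem1]
    have h3 : η (sharp ξ) = g (sharp ξ) (sharp η) := by rw [hxi, hgsymm]
    linear_combination (-(Real.sqrt 2) / 2) * h3
end

section
/- Define J_φ : E → E by J_φ(x+ξ) = −♯_φ ξ + ♭_φ x and F_φ : E → E by F_φ(x+ξ) = ♯_φ ξ + ♭_φ x. Then G_g(J_φ a, J_φ b) = ε·G_g(a, b) and G_g(F_φ a, F_φ b) = ε·G_g(a, b) for all a, b ∈ E, and the fundamental tensors satisfy G_g(J_φ(x+ξ), y+η) = −ε·ξ(Jy) + η(Jx) and G_g(F_φ(x+ξ), y+η) = ε·ξ(Jy) + η(Jx) for all x, y ∈ V and ξ, η ∈ V*. -/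
open Module

/-- for an `(α,ε)`-metric structure `(J, g)` with fundamental
tensor `φ(x,y) = g(Jx,y)`, the maps `J_φ(x+ξ) = −♯_φ ξ + ♭_φ x` and
`F_φ(x+ξ) = ♯_φ ξ + ♭_φ x` satisfy `G_g(J_φ a, J_φ b) = ε·G_g(a,b)`,
`G_g(F_φ a, F_φ b) = ε·G_g(a,b)`, and the fundamental tensors are
`G_g(J_φ(x+ξ), y+η) = −ε·ξ(Jy) + η(Jx)` and
`G_g(F_φ(x+ξ), y+η) = ε·ξ(Jy) + η(Jx)`. -/
theorem statement15 (V : Type*) [AddCommGroup V] [Module ℝ V] [FiniteDimensional ℝ V]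
    (g : V →ₗ[ℝ] V →ₗ[ℝ] ℝ) (hgsymm : ∀ x y : V, g x y = g y x)
    (flat : V →ₗ[ℝ] Dual ℝ V) (hflat : ∀ x y : V, flat x y = g x y)
    (sharp : Dual ℝ V →ₗ[ℝ] V)
    (hsf : ∀ ξ : Dual ℝ V, flat (sharp ξ) = ξ) (hfs : ∀ x : V, sharp (flat x) = x)
    (Gg : (V × Dual ℝ V) →ₗ[ℝ] (V × Dual ℝ V) →ₗ[ℝ] ℝ)
    (hGg : ∀ (x y : V) (ξ η : Dual ℝ V),
        Gg (x, ξ) (y, η) = g x y + g (sharp ξ) (sharp η))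
    (α ε : ℝ) (hα : α = 1 ∨ α = -1) (hε : ε = 1 ∨ ε = -1)
    (J : V →ₗ[ℝ] V) (hJ2 : J ∘ₗ J = α • LinearMap.id)
    (hJg : ∀ x y : V, g (J x) (J y) = ε * g x y)
    (flatPhi : V →ₗ[ℝ] Dual ℝ V) (hflatPhi : ∀ x y : V, flatPhi x y = g (J x) y)
    (sharpPhi : Dual ℝ V →ₗ[ℝ] V)
    (hsfPhi : ∀ ξ : Dual ℝ V, flatPhi (sharpPhi ξ) = ξ)
    (hfsPhi : ∀ x : V, sharpPhi (flatPhi x) = x)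
    (Jphi : (V × Dual ℝ V) →ₗ[ℝ] (V × Dual ℝ V))
    (hJphi : ∀ (x : V) (ξ : Dual ℝ V), Jphi (x, ξ) = (-(sharpPhi ξ), flatPhi x))
    (Fphi : (V × Dual ℝ V) →ₗ[ℝ] (V × Dual ℝ V))
    (hFphi : ∀ (x : V) (ξ : Dual ℝ V), Fphi (x, ξ) = (sharpPhi ξ, flatPhi x)) :
    (∀ a b, Gg (Jphi a) (Jphi b) = ε * Gg a b) ∧
    (∀ a b, Gg (Fphi a) (Fphi b) = ε * Gg a b) ∧
    (∀ (x y : V) (ξ η : Dual ℝ V),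
        Gg (Jphi (x, ξ)) (y, η) = -ε * ξ (J y) + η (J x)) ∧
    (∀ (x y : V) (ξ η : Dual ℝ V),
        Gg (Fphi (x, ξ)) (y, η) = ε * ξ (J y) + η (J x)) := by

  have hα2 : α * α = 1 := by rcases hα with h | h <;> rw [h] <;> norm_num
  have hJJ : ∀ x : V, J (J x) = α • x := by
    intro x
    have := LinearMap.ext_iff.mp hJ2 x
    simpa using this
  have hsg : ∀ (ξ : Dual ℝ V) (y : V), g (sharp ξ) y = ξ y := by
    intro ξ y; rw [← hflat, hsf]
  have hsP : ∀ ξ : Dual ℝ V, sharpPhi ξ = α • J (sharp ξ) := by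
    intro ξ
    have h1 : flatPhi (α • J (sharp ξ)) = ξ := by
      ext y
      simp only [map_smul, LinearMap.smul_apply, hflatPhi, hJJ, hsg, smul_eq_mul]
      rw [← mul_assoc, hα2, one_mul]
    conv_lhs => rw [← h1]
    rw [hfsPhi]
  have hJs : ∀ (ξ : Dual ℝ V) (y : V), g (J (sharp ξ)) y = α * (ε * ξ (J y)) := by
    intro ξ y
    calc g (J (sharp ξ)) y = g (J (sharp ξ)) (J (α • J y)) := by
          rw [map_smul, hJJ, smul_smul, hα2, one_smul]
      _ = ε * g (sharp ξ) (α • J y) := hJg _ _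
      _ = α * (ε * ξ (J y)) := by
          rw [map_smul, smul_eq_mul, hsg]; ring
  have hsFP : ∀ x : V, sharp (flatPhi x) = J x := by
    intro x
    have h : flatPhi x = flat (J x) := by
      ext y; rw [hflatPhi, hflat]
    rw [h, hfs]
  refine ⟨?_, ?_, ?_, ?_⟩
  · rintro ⟨x, ξ⟩ ⟨y, η⟩
    rw [hJphi, hJphi, hGg, hGg, hsP, hsP, hsFP, hsFP, hJg]
    simp only [map_neg, map_smul, LinearMap.neg_apply, LinearMap.smul_apply, hJg, smul_eq_mul]
    linear_combination (ε * g (sharp ξ) (sharp η)) * hα2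
  · rintro ⟨x, ξ⟩ ⟨y, η⟩
    rw [hFphi, hFphi, hGg, hGg, hsP, hsP, hsFP, hsFP, hJg]
    simp only [map_smul, LinearMap.smul_apply, hJg, smul_eq_mul]
    linear_combination (ε * g (sharp ξ) (sharp η)) * hα2
  · intro x y ξ η
    rw [hJphi, hGg, hsP, hsFP]
    simp only [map_neg, map_smul, LinearMap.neg_apply, LinearMap.smul_apply, hJs, smul_eq_mul]
    rw [hgsymm (J x) (sharp η), hsg]
    linear_combination (-(ε * ξ (J y))) * hα2
  · intro x y ξ η
    rw [hFphi, hGg, hsP, hsFP]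
    simp only [map_smul, LinearMap.smul_apply, hJs, smul_eq_mul]
    rw [hgsymm (J x) (sharp η), hsg]
    linear_combination (ε * ξ (J y)) * hα2
end

section
/- Let λ ∈ {+1, −1} and define J_{λ,J} : E → E by J_{λ,J}(x+ξ) = Jx + λ·J*ξ. Then J_{λ,J} is compatible with the induced generalized metric: G_g(J_{λ,J} a, J_{λ,J} b) = ε·G_g(a, b) for all a, b ∈ E, and its fundamental tensor Φ(a,b) := G_g(J_{λ,J} a, b) satisfies Φ(x+ξ, y+η) = φ(x, y) − λ·φ(♯_φ ξ, ♯_φ η) for all x, y ∈ V and ξ, η ∈ V*. -/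
open Module

/-- for a `(−1,ε)`-metric structure `(J, g)` with fundamental
tensor `φ(x,y) = g(Jx,y)` and `λ ∈ {±1}`, the map `J_{λ,J}(x+ξ) = Jx + λ·J*ξ`
satisfies `G_g(J_{λ,J}a, J_{λ,J}b) = ε·G_g(a,b)` and its fundamental tensor is
`Φ(x+ξ, y+η) = φ(x,y) − λ·φ(♯_φ ξ, ♯_φ η)`. -/
theorem statement16 (V : Type*) [AddCommGroup V] [Module ℝ V] [FiniteDimensional ℝ V]
    (g : V →ₗ[ℝ] V →ₗ[ℝ] ℝ) (hgsymm : ∀ x y : V, g x y = g y x)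
    (flat : V →ₗ[ℝ] Dual ℝ V) (hflat : ∀ x y : V, flat x y = g x y)
    (sharp : Dual ℝ V →ₗ[ℝ] V)
    (hsf : ∀ ξ : Dual ℝ V, flat (sharp ξ) = ξ) (hfs : ∀ x : V, sharp (flat x) = x)
    (Gg : (V × Dual ℝ V) →ₗ[ℝ] (V × Dual ℝ V) →ₗ[ℝ] ℝ)
    (hGg : ∀ (x y : V) (ξ η : Dual ℝ V),
        Gg (x, ξ) (y, η) = g x y + g (sharp ξ) (sharp η))
    (ε : ℝ) (hε : ε = 1 ∨ ε = -1)
    (J : V →ₗ[ℝ] V) (hJ2 : J ∘ₗ J = -LinearMap.id)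
    (hJg : ∀ x y : V, g (J x) (J y) = ε * g x y)
    (flatPhi : V →ₗ[ℝ] Dual ℝ V) (hflatPhi : ∀ x y : V, flatPhi x y = g (J x) y)
    (sharpPhi : Dual ℝ V →ₗ[ℝ] V)
    (hsfPhi : ∀ ξ : Dual ℝ V, flatPhi (sharpPhi ξ) = ξ)
    (hfsPhi : ∀ x : V, sharpPhi (flatPhi x) = x)
    (lam : ℝ) (hlam : lam = 1 ∨ lam = -1)
    (JlJ : (V × Dual ℝ V) →ₗ[ℝ] (V × Dual ℝ V))
    (hJlJ : ∀ (x : V) (ξ : Dual ℝ V), JlJ (x, ξ) = (J x, lam • J.dualMap ξ)) :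
    (∀ a b, Gg (JlJ a) (JlJ b) = ε * Gg a b) ∧
    (∀ (x y : V) (ξ η : Dual ℝ V),
        Gg (JlJ (x, ξ)) (y, η)
          = g (J x) y - lam * g (J (sharpPhi ξ)) (sharpPhi η)) := by
  have hJJ : ∀ x : V, J (J x) = -x := by
    intro x
    have := LinearMap.congr_fun hJ2 x
    simpa using this
  have hee : ε * ε = 1 := by rcases hε with h | h <;> rw [h] <;> ring
  have hll : lam * lam = 1 := by rcases hlam with h | h <;> rw [h] <;> ring
  have ginj : ∀ a b : V, (∀ y, g a y = g b y) → a = b := by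
    intro a b h
    have hfl : flat a = flat b := by
      ext y; rw [hflat, hflat, h]
    calc a = sharp (flat a) := (hfs a).symm
      _ = sharp (flat b) := by rw [hfl]
      _ = b := hfs b
  have hgJ : ∀ a y : V, g a (J y) = -(ε * g (J a) y) := by
    intro a y
    have h1 := hJg a (J y)
    rw [hJJ] at h1
    have h2 : -(g (J a) y) = ε * g a (J y) := by simpa using h1
    have h3 : g a (J y) = ε * (ε * g a (J y)) := by rw [← mul_assoc, hee, one_mul]
    rw [h3, ← h2]; ring
  have hsharpJ : ∀ ξ : Dual ℝ V, sharp (J.dualMap ξ) = -(ε • J (sharp ξ)) := by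
    intro ξ
    apply ginj
    intro y
    have h1 : g (sharp (J.dualMap ξ)) y = ξ (J y) := by
      rw [← hflat, hsf]; rfl
    have h2 : ξ (J y) = g (sharp ξ) (J y) := by
      rw [← hflat, hsf]
    rw [h1, h2, hgJ]
    simp [smul_eq_mul]
  have hPhi : ∀ ξ : Dual ℝ V, sharpPhi ξ = -(J (sharp ξ)) := by
    intro ξ
    have hkey : ∀ x : V, flatPhi x = flat (J x) := by
      intro x; ext y; rw [hflatPhi, hflat]
    have h1 : flat (J (sharpPhi ξ)) = flat (sharp ξ) := by
      rw [← hkey, hsfPhi, hsf]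
    have h2 : J (sharpPhi ξ) = sharp ξ := by
      have := congrArg sharp h1
      rwa [hfs, hfs] at this
    have h3 := congrArg J h2
    rw [hJJ] at h3
    rw [← h3, neg_neg]
  constructor
  · rintro ⟨x, ξ⟩ ⟨y, η⟩
    rw [hJlJ, hJlJ, hGg, hGg, hJg]
    simp only [map_smul, hsharpJ]
    simp only [LinearMap.map_smul, LinearMap.map_neg, map_neg, LinearMap.smul_apply,
      LinearMap.neg_apply, smul_eq_mul, neg_neg]
    rw [hJg]
    linear_combination (ε * ε * ε * g (sharp ξ) (sharp η)) * hll
      + (ε * g (sharp ξ) (sharp η)) * hee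
  · intro x y ξ η
    rw [hJlJ, hGg, map_smul, hsharpJ, hPhi, hPhi]
    have h2 : J (-(J (sharp ξ))) = sharp ξ := by rw [map_neg, hJJ, neg_neg]
    rw [h2]
    simp only [LinearMap.map_smul, map_neg, LinearMap.smul_apply, LinearMap.neg_apply,
      smul_eq_mul]
    rw [hgJ]
    ring
end

section
/- Assume V ≠ {0}. Define F_{J,g} : E → E by F_{J,g}(x+ξ) = (Jx + √2·♯_g ξ) + (√2·♭_g x + ε·J*ξ). Then there exists c ∈ {+1, −1} with G_g(F_{J,g} a, F_{J,g} b) = c·G_g(a, b) for all a, b ∈ E if and only if ε = −1. When ε = −1, G_g(F_{J,g} a, F_{J,g} b) = G_g(a, b) for all a, b ∈ E (an induced generalized pseudo-Riemannian almost product structure), and the twin metric Φ(a,b) := G_g(F_{J,g} a, b) satisfies Φ(x+ξ, y+η) = 2√2·G₀(x+ξ, y+η) + φ(x, y) + φ(♯_φ ξ, ♯_φ η). -/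
open Module

/-- for a `(−1,ε)`-metric structure `(J, g)` on `V ≠ 0` with
fundamental tensor `φ(x,y) = g(Jx,y)`, the map
`F_{J,g}(x+ξ) = (Jx + √2·♯_g ξ) + (√2·♭_g x + ε·J*ξ)` is compatible with `G_g`
(for some `c ∈ {±1}`) iff `ε = −1`, in which case it is a `G_g`-isometry with
twin metric `Φ(x+ξ, y+η) = 2√2·G₀(x+ξ, y+η) + φ(x,y) + φ(♯_φ ξ, ♯_φ η)`. -/
theorem statement17 (V : Type*) [AddCommGroup V] [Module ℝ V] [FiniteDimensional ℝ V]
    (hV : ∃ x : V, x ≠ 0)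
    (G0 : (V × Dual ℝ V) →ₗ[ℝ] (V × Dual ℝ V) →ₗ[ℝ] ℝ)
    (hG0 : ∀ (x y : V) (ξ η : Dual ℝ V), G0 (x, ξ) (y, η) = (1/2) * (ξ y + η x))
    (g : V →ₗ[ℝ] V →ₗ[ℝ] ℝ) (hgsymm : ∀ x y : V, g x y = g y x)
    (flat : V →ₗ[ℝ] Dual ℝ V) (hflat : ∀ x y : V, flat x y = g x y)
    (sharp : Dual ℝ V →ₗ[ℝ] V)
    (hsf : ∀ ξ : Dual ℝ V, flat (sharp ξ) = ξ) (hfs : ∀ x : V, sharp (flat x) = x)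
    (Gg : (V × Dual ℝ V) →ₗ[ℝ] (V × Dual ℝ V) →ₗ[ℝ] ℝ)
    (hGg : ∀ (x y : V) (ξ η : Dual ℝ V),
        Gg (x, ξ) (y, η) = g x y + g (sharp ξ) (sharp η))
    (ε : ℝ) (hε : ε = 1 ∨ ε = -1)
    (J : V →ₗ[ℝ] V) (hJ2 : J ∘ₗ J = -LinearMap.id)
    (hJg : ∀ x y : V, g (J x) (J y) = ε * g x y)
    (flatPhi : V →ₗ[ℝ] Dual ℝ V) (hflatPhi : ∀ x y : V, flatPhi x y = g (J x) y)
    (sharpPhi : Dual ℝ V →ₗ[ℝ] V)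
    (hsfPhi : ∀ ξ : Dual ℝ V, flatPhi (sharpPhi ξ) = ξ)
    (hfsPhi : ∀ x : V, sharpPhi (flatPhi x) = x)
    (FJg : (V × Dual ℝ V) →ₗ[ℝ] (V × Dual ℝ V))
    (hFJg : ∀ (x : V) (ξ : Dual ℝ V),
        FJg (x, ξ) = (J x + Real.sqrt 2 • sharp ξ,
                      Real.sqrt 2 • flat x + ε • J.dualMap ξ)) :
    ((∃ c : ℝ, (c = 1 ∨ c = -1) ∧ ∀ a b, Gg (FJg a) (FJg b) = c * Gg a b) ↔ ε = -1) ∧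
    (ε = -1 →
      (∀ a b, Gg (FJg a) (FJg b) = Gg a b) ∧
      (∀ (x y : V) (ξ η : Dual ℝ V),
          Gg (FJg (x, ξ)) (y, η)
            = 2 * Real.sqrt 2 * G0 (x, ξ) (y, η)
              + g (J x) y + g (J (sharpPhi ξ)) (sharpPhi η))) := by

  have h2 : Real.sqrt 2 * Real.sqrt 2 = 2 := Real.mul_self_sqrt (by norm_num)
  have hεsq : ε * ε = 1 := by rcases hε with h | h <;> rw [h] <;> norm_num
  have hJJ : ∀ v : V, J (J v) = -v := by
    intro v
    have h := LinearMap.ext_iff.mp hJ2 v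
    simpa using h
  have h1 : ∀ (ξ : Dual ℝ V) (v : V), g (sharp ξ) v = ξ v := by
    intro ξ v; rw [← hflat, hsf]
  have h1' : ∀ (v : V) (ξ : Dual ℝ V), g v (sharp ξ) = ξ v := by
    intro v ξ; rw [hgsymm, h1]
  have hJv : ∀ a v : V, g (J a) v = -(ε * g a (J v)) := by
    intro a v
    have h := hJg a (J v)
    rw [hJJ, map_neg] at h
    linarith
  have hsJ : ∀ ξ : Dual ℝ V, sharp (J.dualMap ξ) = (-ε) • J (sharp ξ) := by
    intro ξ
    have hfl : flat ((-ε) • J (sharp ξ)) = J.dualMap ξ := by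
      ext v
      rw [map_smul]
      simp only [LinearMap.smul_apply, LinearMap.dualMap_apply, smul_eq_mul]
      rw [hflat, hJv, h1]
      have h3 : -ε * -(ε * ξ (J v)) = ε * ε * ξ (J v) := by ring
      rw [h3, hεsq, one_mul]
    rw [← hfl, hfs]
  have hsh2 : ∀ (x : V) (ξ : Dual ℝ V),
      sharp (Real.sqrt 2 • flat x + ε • J.dualMap ξ)
        = Real.sqrt 2 • x - J (sharp ξ) := by
    intro x ξ
    rw [map_add, map_smul, map_smul, hfs, hsJ, smul_smul]
    have h3 : ε * -ε = -1 := by nlinarith [hεsq]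
    rw [h3, neg_one_smul, sub_eq_add_neg]
  have e5 : ∀ (x : V) (η : Dual ℝ V), g x (J (sharp η)) = -(ε * η (J x)) := by
    intro x η; rw [hgsymm, hJv, h1]
  have key : ∀ (x y : V) (ξ η : Dual ℝ V),
      Gg (FJg (x, ξ)) (FJg (y, η))
        = (2 + ε) * (g x y + g (sharp ξ) (sharp η))
          + Real.sqrt 2 * (1 + ε) * (η (J x) + ξ (J y)) := by
    intro x y ξ η
    rw [hFJg, hFJg, hGg, hsh2, hsh2]
    simp only [map_add, map_sub, map_smul, LinearMap.add_apply, LinearMap.sub_apply,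
      LinearMap.smul_apply, smul_eq_mul]
    rw [hJg x y, hJg (sharp ξ) (sharp η), hJv (sharp ξ) y, e5 x η, h1' (J x) η,
      h1 ξ (J y), h1 ξ (sharp η)]
    linear_combination (g x y + ξ (sharp η)) * h2
  have hexist : ∃ x : V, g x x ≠ 0 := by
    obtain ⟨x0, hx0⟩ := hV
    by_contra hc
    push_neg at hc
    have hy : ∀ y, g x0 y = 0 := by
      intro y
      have ha := hc (x0 + y)
      have hb := hc x0
      have hcy := hc y
      have hs := hgsymm x0 y
      simp only [map_add, LinearMap.add_apply] at ha
      linarith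
    have hfl0 : flat x0 = 0 := by ext v; rw [hflat]; simp [hy]
    have hx00 : x0 = 0 := by rw [← hfs x0, hfl0, map_zero]
    exact hx0 hx00
  have hsPhi : ∀ ζ : Dual ℝ V, sharpPhi ζ = -(J (sharp ζ)) := by
    intro ζ
    have hfp : flatPhi (-(J (sharp ζ))) = ζ := by
      ext v
      simp [map_neg, hflatPhi, hJJ, h1]
    calc sharpPhi ζ = sharpPhi (flatPhi (-(J (sharp ζ)))) := by rw [hfp]
      _ = -(J (sharp ζ)) := hfsPhi _
  constructor
  · constructor
    · rintro ⟨c, hc, hiso⟩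
      by_contra hne
      have hε1 : ε = 1 := hε.resolve_right hne
      subst hε1
      obtain ⟨x, hx⟩ := hexist
      have hi := hiso (x, 0) (x, 0)
      rw [key, hGg] at hi
      simp only [map_zero, LinearMap.zero_apply, add_zero, zero_add, mul_zero] at hi
      rcases hc with rfl | rfl <;> apply hx <;> linarith
    · intro hε1
      refine ⟨1, Or.inl rfl, ?_⟩
      rintro ⟨x, ξ⟩ ⟨y, η⟩
      rw [key, hGg, hε1]
      ring
  · intro hε1
    subst hε1
    constructor
    · rintro ⟨x, ξ⟩ ⟨y, η⟩
      rw [key, hGg]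
      ring
    · intro x y ξ η
      rw [hFJg, hGg, hsh2, hG0, hsPhi, hsPhi]
      simp only [map_add, map_sub, map_smul, map_neg, LinearMap.add_apply,
        LinearMap.sub_apply, LinearMap.smul_apply, LinearMap.neg_apply,
        smul_eq_mul, hJJ, neg_neg]
      rw [hJv (sharp ξ) (sharp η), h1 ξ y, h1' x η, h1 ξ (J (sharp η))]
      ring
end

section
/- Define J_g, F_g, J_φ, F_φ, J_{λ,J} : E → E by J_g(x+ξ) = −♯_g ξ + ♭_g x, F_g(x+ξ) = ♯_g ξ + ♭_g x, J_φ(x+ξ) = −♯_φ ξ + ♭_φ x, F_φ(x+ξ) = ♯_φ ξ + ♭_φ x, and J_{λ,J}(x+ξ) = Jx + λ·J*ξ for λ ∈ {+1, −1}. Then the following generalized triple structures arise: (i) (J_g, J_{ε,J}, J_φ) is a generalized almost hypercomplex structure: J_g² = J_{ε,J}² = J_φ² = −id, J_g ∘ J_{ε,J} = J_φ and J_{ε,J} ∘ J_g = −J_φ; (ii) (J_g, J_{−ε,J}, F_φ) is a generalized almost bicomplex structure: F_φ² = id and J_g ∘ J_{−ε,J} = J_{−ε,J} ∘ J_g = F_φ;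 (iii) (J_φ, J_{−ε,J}, −F_g) is a generalized almost bicomplex structure: F_g² = id and J_φ ∘ J_{−ε,J} = J_{−ε,J} ∘ J_φ = −F_g; (iv) (F_g, F_φ, J_{ε,J}) is a generalized almost biparacomplex structure: F_g² = F_φ² = id, F_g ∘ F_φ = J_{ε,J} and F_φ ∘ F_g = −J_{ε,J}. -/
open Module

/-- the generalized triple structures induced by a `(−1,ε)`-metric
structure `(J, g)` with fundamental tensor `φ(x,y) = g(Jx,y)`:
(i) `(J_g, J_{ε,J}, J_φ)` is a generalized almost hypercomplex structure;
(ii) `(J_g, J_{−ε,J}, F_φ)` is a generalized almost bicomplex structure;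
(iii) `(J_φ, J_{−ε,J}, −F_g)` is a generalized almost bicomplex structure;
(iv) `(F_g, F_φ, J_{ε,J})` is a generalized almost biparacomplex structure. -/
theorem statement19 (V : Type*) [AddCommGroup V] [Module ℝ V] [FiniteDimensional ℝ V]
    (g : V →ₗ[ℝ] V →ₗ[ℝ] ℝ) (hgsymm : ∀ x y : V, g x y = g y x)
    (flat : V →ₗ[ℝ] Dual ℝ V) (hflat : ∀ x y : V, flat x y = g x y)
    (sharp : Dual ℝ V →ₗ[ℝ] V)
    (hsf : ∀ ξ : Dual ℝ V, flat (sharp ξ) = ξ) (hfs : ∀ x : V, sharp (flat x) = x)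
    (ε : ℝ) (hε : ε = 1 ∨ ε = -1)
    (J : V →ₗ[ℝ] V) (hJ2 : J ∘ₗ J = -LinearMap.id)
    (hJg : ∀ x y : V, g (J x) (J y) = ε * g x y)
    (flatPhi : V →ₗ[ℝ] Dual ℝ V) (hflatPhi : ∀ x y : V, flatPhi x y = g (J x) y)
    (sharpPhi : Dual ℝ V →ₗ[ℝ] V)
    (hsfPhi : ∀ ξ : Dual ℝ V, flatPhi (sharpPhi ξ) = ξ)
    (hfsPhi : ∀ x : V, sharpPhi (flatPhi x) = x)
    (Jg : (V × Dual ℝ V) →ₗ[ℝ] (V × Dual ℝ V))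
    (hJgdef : ∀ (x : V) (ξ : Dual ℝ V), Jg (x, ξ) = (-(sharp ξ), flat x))
    (Fg : (V × Dual ℝ V) →ₗ[ℝ] (V × Dual ℝ V))
    (hFgdef : ∀ (x : V) (ξ : Dual ℝ V), Fg (x, ξ) = (sharp ξ, flat x))
    (Jphi : (V × Dual ℝ V) →ₗ[ℝ] (V × Dual ℝ V))
    (hJphi : ∀ (x : V) (ξ : Dual ℝ V), Jphi (x, ξ) = (-(sharpPhi ξ), flatPhi x))
    (Fphi : (V × Dual ℝ V) →ₗ[ℝ] (V × Dual ℝ V))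
    (hFphi : ∀ (x : V) (ξ : Dual ℝ V), Fphi (x, ξ) = (sharpPhi ξ, flatPhi x))
    (JeJ : (V × Dual ℝ V) →ₗ[ℝ] (V × Dual ℝ V))
    (hJeJ : ∀ (x : V) (ξ : Dual ℝ V), JeJ (x, ξ) = (J x, ε • J.dualMap ξ))
    (JmeJ : (V × Dual ℝ V) →ₗ[ℝ] (V × Dual ℝ V))
    (hJmeJ : ∀ (x : V) (ξ : Dual ℝ V), JmeJ (x, ξ) = (J x, (-ε) • J.dualMap ξ)) :
    -- (i) generalized almost hypercomplex structure (J_g, J_{ε,J}, J_φ)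
    (Jg ∘ₗ Jg = -LinearMap.id ∧ JeJ ∘ₗ JeJ = -LinearMap.id ∧
      Jphi ∘ₗ Jphi = -LinearMap.id ∧
      Jg ∘ₗ JeJ = Jphi ∧ JeJ ∘ₗ Jg = -Jphi) ∧
    -- (ii) generalized almost bicomplex structure (J_g, J_{−ε,J}, F_φ)
    (Fphi ∘ₗ Fphi = LinearMap.id ∧ JmeJ ∘ₗ JmeJ = -LinearMap.id ∧
      Jg ∘ₗ JmeJ = Fphi ∧ JmeJ ∘ₗ Jg = Fphi) ∧
    -- (iii) generalized almost bicomplex structure (J_φ, J_{−ε,J}, −F_g)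
    (Fg ∘ₗ Fg = LinearMap.id ∧
      Jphi ∘ₗ JmeJ = -Fg ∧ JmeJ ∘ₗ Jphi = -Fg) ∧
    -- (iv) generalized almost biparacomplex structure (F_g, F_φ, J_{ε,J})
    (Fg ∘ₗ Fg = LinearMap.id ∧ Fphi ∘ₗ Fphi = LinearMap.id ∧
      Fg ∘ₗ Fphi = JeJ ∧ Fphi ∘ₗ Fg = -JeJ) := by

  -- basic algebraic facts
  have hε2 : ε * ε = 1 := by rcases hε with h | h <;> rw [h] <;> norm_num
  have hJJ : ∀ x : V, J (J x) = -x := by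
    intro x
    have := LinearMap.congr_fun hJ2 x
    simpa using this
  have hdd : ∀ ξ : Dual ℝ V, J.dualMap (J.dualMap ξ) = -ξ := by
    intro ξ; ext y; simp [LinearMap.dualMap_apply, hJJ]
  have hgswap : ∀ a b : V, g a (J b) = -ε * g (J a) b := by
    intro a b
    have h := hJg (J a) b
    rw [hJJ] at h
    simp only [map_neg, LinearMap.neg_apply] at h
    linarith
  have hgswap2 : ∀ a b : V, g (J a) b = -ε * g a (J b) := by
    intro a b
    rw [hgsymm (J a) b, hgswap b a, hgsymm (J b) a]
  -- key lemmas
  have key1 : ∀ x : V, flatPhi x = flat (J x) := by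
    intro x; ext y; rw [hflatPhi, hflat]
  have key2 : ∀ ξ : Dual ℝ V, sharpPhi ξ = -(J (sharp ξ)) := by
    intro ξ
    have h : flatPhi (-(J (sharp ξ))) = ξ := by
      ext y
      simp only [map_neg, LinearMap.neg_apply, hflatPhi, hJJ]
      have := hflat (sharp ξ) y
      rw [hsf] at this
      simp [← this]
    calc sharpPhi ξ = sharpPhi (flatPhi (-(J (sharp ξ)))) := by rw [h]
      _ = -(J (sharp ξ)) := hfsPhi _
  have key3 : ∀ ξ : Dual ℝ V, sharp (J.dualMap ξ) = (-ε) • J (sharp ξ) := by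
    intro ξ
    have h : flat ((-ε) • J (sharp ξ)) = J.dualMap ξ := by
      ext y
      simp only [map_smul, LinearMap.smul_apply, hflat, LinearMap.dualMap_apply, smul_eq_mul]
      rw [hgswap2]
      have := hflat (sharp ξ) (J y)
      rw [hsf] at this
      rw [← this]
      rcases hε with h | h <;> rw [h] <;> ring
    calc sharp (J.dualMap ξ) = sharp (flat ((-ε) • J (sharp ξ))) := by rw [h]
      _ = (-ε) • J (sharp ξ) := hfs _
  have key4 : ∀ x : V, J.dualMap (flat x) = (-ε) • flat (J x) := by
    intro x; ext y
    simp only [LinearMap.dualMap_apply, LinearMap.smul_apply, hflat, smul_eq_mul]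
    exact hgswap x y
  have key5 : ∀ ξ : Dual ℝ V, flat (J (sharp ξ)) = (-ε) • J.dualMap ξ := by
    intro ξ
    have h := congrArg flat (key3 ξ)
    rw [hsf, map_smul] at h
    rw [h, smul_smul, neg_mul_neg, hε2, one_smul]
  -- now prove everything pointwise
  refine ⟨⟨?_, ?_, ?_, ?_, ?_⟩, ⟨?_, ?_, ?_, ?_⟩, ⟨?_, ?_, ?_⟩, ⟨?_, ?_, ?_, ?_⟩⟩ <;>
  · apply LinearMap.ext
    rintro ⟨x, ξ⟩
    simp only [LinearMap.comp_apply, LinearMap.neg_apply, LinearMap.id_apply,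
      hJgdef, hFgdef, hJphi, hFphi, hJeJ, hJmeJ, key1, key2, key3, key4, key5,
      map_neg, map_smul, hsf, hfs, hJJ, hdd, smul_smul, smul_neg, neg_smul,
      neg_neg, neg_mul, mul_neg, hε2, one_smul, Prod.neg_mk, Prod.mk.injEq]
    all_goals constructor
    all_goals first | rfl | module | (ext y; ring_nf) | simp
end
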